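/- Delta method for reciprocals (the standardized-mean part of Theorem 1): Let (Ω_n, 𝓕_n, P_n) be probability spaces and T_n : Ω_n → ℝ measurable random variables, let C ∈ ℝ with C ≠ 0 and σ² ≥ 0, and suppose the law of √n·(T_n − C) converges weakly, as n → ∞, to the Gaussian measure N(0, σ²) on ℝ. Then the law of √n·(1/T_n − 1/C) converges weakly to N(0, σ²/C⁴), where 1/T_n is interpreted by any fixed convention on the event {T_n = 0} (e.g. 1/0 = 0). -/

import Mathlib

open MeasureTheory ProbabilityTheory Filter Topology

/-!
Write `Z n = √n (T n - C)` and `φ x = 1 / x`. Then `√n (1 / T n - 1 / C) = g n (Z n)` with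
`g n z = √n (φ (C + z / √n) - φ C)`, and differentiability of `φ` at `C ≠ 0` makes `g n`
converge to `z ↦ φ'(C) z` uniformly on compact sets. The laws of `Z n` converge, hence are
tight, so `g n (Z n) - φ'(C) Z n → 0` in probability, and `g n (Z n)` has the same limit in
distribution as `φ'(C) Z n`, namely the image of `N(0, σ²)` under `z ↦ -z / C²`,
which is `N(0, σ² / C⁴)`.
-/

lemma HasDerivAt.tendstoLocallyUniformly_mul_sub {ι : Type*} {l : Filter ι} {φ : ℝ → ℝ}
    {φ' c : ℝ} (hφ : HasDerivAt φ φ' c) {r : ι → ℝ} (hr : Tendsto r l atTop) :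
    TendstoLocallyUniformly (fun i z ↦ r i * (φ (c + z / r i) - φ c)) (fun z ↦ φ' * z) l := by
  rw [Metric.tendstoLocallyUniformly_iff]
  intro ε hε x
  set M := |x| + 1
  have hM : 0 < M := by positivity
  obtain ⟨δ, hδ, hφδ⟩ := Metric.eventually_nhds_iff.1
    ((hasDerivAt_iff_isLittleO.1 hφ).def (show 0 < ε / (2 * M) by positivity))
  refine ⟨Metric.ball x 1, Metric.ball_mem_nhds x one_pos, ?_⟩
  filter_upwards [hr.eventually_gt_atTop (M / δ)] with i hi y hy
  have hr : 0 < r i := lt_trans (by positivity) hi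
  have hyM : |y| < M := by
    have := abs_sub_abs_le_abs_sub y x
    rw [Metric.mem_ball, Real.dist_eq] at hy
    linarith
  have hyδ : dist (c + y / r i) c < δ := by
    rw [Real.dist_eq, add_sub_cancel_left, abs_div, abs_of_pos hr, div_lt_iff₀ hr]
    rw [div_lt_iff₀ hδ] at hi
    linarith
  have hrem := hφδ hyδ
  rw [add_sub_cancel_left, Real.norm_eq_abs, Real.norm_eq_abs, smul_eq_mul] at hrem
  calc dist (φ' * y) (r i * (φ (c + y / r i) - φ c))
      = r i * |φ (c + y / r i) - φ c - y / r i * φ'| := by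
        rw [Real.dist_eq, ← abs_of_pos hr, ← abs_mul, abs_of_pos hr, ← abs_neg]
        congr 1
        field_simp
        ring
    _ ≤ r i * (ε / (2 * M) * |y / r i|) := by gcongr
    _ = ε / (2 * M) * |y| := by
        rw [abs_div, abs_of_pos hr]
        field_simp
    _ < ε := by
        rw [div_mul_eq_mul_div, div_lt_iff₀ (by positivity)]
        nlinarith [abs_nonneg y]

namespace MeasureTheory

variable {Ω' E : Type*} {mΩ' : MeasurableSpace Ω'} {μ' : Measure Ω'} [IsProbabilityMeasure μ']
  [MeasurableSpace E]

section Topological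

variable {ι : Type*} {Ω : ι → Type*} [∀ i, MeasurableSpace (Ω i)] {μ : ∀ i, Measure (Ω i)}
  [∀ i, IsProbabilityMeasure (μ i)] [TopologicalSpace E] [OpensMeasurableSpace E]
  {l : Filter ι} {Z : Ω' → E} {X : ∀ i, Ω i → E}

lemma tendstoInDistribution_iff_forall_integral_tendsto (hX : ∀ i, AEMeasurable (X i) (μ i))
    (hZ : AEMeasurable Z μ') :
    TendstoInDistribution X l Z μ μ' ↔ ∀ f : BoundedContinuousFunction E ℝ,
      Tendsto (fun i ↦ ∫ ω, f (X i ω) ∂(μ i)) l (𝓝 (∫ ω, f (Z ω) ∂μ')) := by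
  have hint (f : BoundedContinuousFunction E ℝ) (i : ι) :
      ∫ x, f x ∂(μ i).map (X i) = ∫ ω, f (X i ω) ∂(μ i) :=
    integral_map (hX i) f.continuous.aestronglyMeasurable
  have hintZ (f : BoundedContinuousFunction E ℝ) : ∫ x, f x ∂μ'.map Z = ∫ ω, f (Z ω) ∂μ' :=
    integral_map hZ f.continuous.aestronglyMeasurable
  constructor
  · intro h f
    simpa only [hint, hintZ, ProbabilityMeasure.coe_mk] using
      ProbabilityMeasure.tendsto_iff_forall_integral_tendsto.1 h.tendsto f
  · intro h
    refine ⟨hX, hZ, ProbabilityMeasure.tendsto_iff_forall_integral_tendsto.2 fun f ↦ ?_⟩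
    simpa only [hint, hintZ, ProbabilityMeasure.coe_mk] using h f

lemma tendstoInDistribution_infinitePi_iff (hX : ∀ i, Measurable (X i)) :
    TendstoInDistribution (fun i (ω : ∀ j, Ω j) ↦ X i (ω i)) l Z
      (fun _ ↦ Measure.infinitePi μ) μ' ↔ TendstoInDistribution X l Z μ μ' := by
  have hlaw (i : ι) : (Measure.infinitePi μ).map (fun ω ↦ X i (ω i)) = (μ i).map (X i) := by
    rw [← Measure.infinitePi_map_eval μ i, Measure.map_map (hX i) (measurable_pi_apply i)]
    rfl
  constructor
  · intro h
    exact ⟨fun i ↦ (hX i).aemeasurable, h.aemeasurable_limit,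
      h.tendsto.congr fun i ↦ Subtype.ext (hlaw i)⟩
  · intro h
    exact ⟨fun i ↦ ((hX i).comp (measurable_pi_apply i)).aemeasurable, h.aemeasurable_limit,
      h.tendsto.congr fun i ↦ Subtype.ext (hlaw i).symm⟩

end Topological

section Sequence

variable {Ω : ℕ → Type*} [∀ n, MeasurableSpace (Ω n)] {μ : ∀ n, Measure (Ω n)}
  [∀ n, IsProbabilityMeasure (μ n)] [MetricSpace E] [SecondCountableTopology E]
  [CompleteSpace E] [BorelSpace E] {Z : Ω' → E}

lemma TendstoInDistribution.isTightMeasureSet_range {X : ∀ n, Ω n → E}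
    (h : TendstoInDistribution X atTop Z μ μ') :
    IsTightMeasureSet (Set.range fun n ↦ (μ n).map (X n)) := by
  refine (isTightMeasureSet_of_isCompact_closure
    h.tendsto.isCompact_insert_range.closure).subset ?_
  rintro _ ⟨n, rfl⟩
  exact ⟨_, Set.mem_insert_of_mem _ ⟨n, rfl⟩, rfl⟩

variable {Ω'' F : Type*} {mΩ'' : MeasurableSpace Ω''} {ν : Measure Ω''} [IsProbabilityMeasure ν]
  [SeminormedAddCommGroup F]

lemma TendstoInDistribution.tendstoInMeasure_comp_sub_of_tendstoLocallyUniformly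
    {X : ℕ → Ω'' → E} (hX : TendstoInDistribution X atTop Z (fun _ ↦ ν) μ')
    {g : ℕ → E → F} {g₀ : E → F} (hg : TendstoLocallyUniformly g g₀ atTop) :
    TendstoInMeasure ν (fun n ω ↦ g n (X n ω) - g₀ (X n ω)) atTop 0 := by
  rw [tendstoInMeasure_iff_dist]
  intro δ hδ
  rw [ENNReal.tendsto_nhds_zero]
  intro η hη
  obtain ⟨K, hK, hKη⟩ :=
    isTightMeasureSet_iff_exists_isCompact_measure_compl_le.1 hX.isTightMeasureSet_range η hη
  have hunif : TendstoUniformlyOn g g₀ atTop K :=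
    (tendstoLocallyUniformlyOn_iff_tendstoUniformlyOn_of_compact hK).1
      hg.tendstoLocallyUniformlyOn
  filter_upwards [Metric.tendstoUniformlyOn_iff.1 hunif δ hδ] with n hn
  calc ν {ω | δ ≤ dist (g n (X n ω) - g₀ (X n ω)) 0} ≤ ν (X n ⁻¹' Kᶜ) := by
        refine measure_mono fun ω hω hXω ↦ ?_
        rw [Set.mem_ofPred_eq, dist_zero_right, ← dist_eq_norm, dist_comm] at hω
        exact ((hn _ hXω).trans_le hω).false
    _ = ν.map (X n) Kᶜ :=
        (Measure.map_apply_of_aemeasurable (hX.forall_aemeasurable n)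
          hK.isClosed.measurableSet.compl).symm
    _ ≤ η := hKη _ ⟨n, rfl⟩

theorem TendstoInDistribution.comp_of_tendstoLocallyUniformly [MeasurableSpace F]
    [SecondCountableTopology F] [BorelSpace F] {X : ∀ n, Ω n → E}
    (hX : ∀ n, Measurable (X n)) (h : TendstoInDistribution X atTop Z μ μ')
    {g : ℕ → E → F} {g₀ : E → F} (hg_meas : ∀ n, Measurable (g n)) (hg₀ : Continuous g₀)
    (hg : TendstoLocallyUniformly g g₀ atTop) :
    TendstoInDistribution (fun n ω ↦ g n (X n ω)) atTop (fun ω ↦ g₀ (Z ω)) μ μ' := by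
  -- Only the laws matter, so we may realize all `X n` on the single space `Π n, Ω n`.
  refine (tendstoInDistribution_infinitePi_iff (X := fun n ω ↦ g n (X n ω))
    fun n ↦ (hg_meas n).comp (hX n)).1 ?_
  have hX' := (tendstoInDistribution_infinitePi_iff hX).2 h
  exact tendstoInDistribution_of_tendstoInMeasure_sub _ _ (hX'.continuous_comp hg₀)
    (hX'.tendstoInMeasure_comp_sub_of_tendstoLocallyUniformly hg)
    fun n ↦ ((hg_meas n).comp ((hX n).comp (measurable_pi_apply n))).aemeasurable

theorem TendstoInDistribution.delta_method {T : ∀ n, Ω n → ℝ} (hT : ∀ n, Measurable (T n))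
    {c : ℝ} {r : ℕ → ℝ} (hr : Tendsto r atTop atTop) {Z : Ω' → ℝ}
    (h : TendstoInDistribution (fun n ω ↦ r n * (T n ω - c)) atTop Z μ μ')
    {φ : ℝ → ℝ} {φ' : ℝ} (hφ : Measurable φ) (hφc : HasDerivAt φ φ' c) :
    TendstoInDistribution (fun n ω ↦ r n * (φ (T n ω) - φ c)) atTop (fun ω ↦ φ' * Z ω) μ μ' := by
  have hrepr (n : ℕ) (ω : Ω n) :
      r n * (φ (T n ω) - φ c) = r n * (φ (c + r n * (T n ω - c) / r n) - φ c) := by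
    rcases eq_or_ne (r n) 0 with h0 | h0
    · simp [h0]
    · rw [mul_div_cancel_left₀ _ h0, add_sub_cancel]
  simp only [hrepr]
  exact h.comp_of_tendstoLocallyUniformly (fun n ↦ by fun_prop) (fun n ↦ by fun_prop)
    (by fun_prop) (hφc.tendstoLocallyUniformly_mul_sub hr)

end Sequence

end MeasureTheory

theorem deltaMethod_reciprocal
    (Ω : ℕ → Type) [∀ n, MeasurableSpace (Ω n)]
    (P : ∀ n, Measure (Ω n)) [∀ n, IsProbabilityMeasure (P n)]
    (T : ∀ n, Ω n → ℝ) (hT : ∀ n, Measurable (T n))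
    (C : ℝ) (hC : C ≠ 0) (v : ℝ)
    (hconv : ∀ f : BoundedContinuousFunction ℝ ℝ,
      Tendsto (fun n => ∫ ω, f (Real.sqrt n * (T n ω - C)) ∂(P n)) atTop
        (𝓝 (∫ x, f x ∂(gaussianReal 0 v.toNNReal)))) :
    ∀ f : BoundedContinuousFunction ℝ ℝ,
      Tendsto (fun n => ∫ ω, f (Real.sqrt n * (1 / T n ω - 1 / C)) ∂(P n)) atTop
        (𝓝 (∫ x, f x ∂(gaussianReal 0 (v / C ^ 4).toNNReal))) := by
  have hlaw : TendstoInDistribution (fun (n : ℕ) ω ↦ √n * (T n ω - C)) atTop (fun x ↦ x) P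
      (gaussianReal 0 v.toNNReal) :=
    (tendstoInDistribution_iff_forall_integral_tendsto (fun n ↦ by fun_prop)
      aemeasurable_id).2 hconv
  have hrecip := hlaw.delta_method hT (Real.tendsto_sqrt_atTop.comp tendsto_natCast_atTop_atTop)
    (φ := fun x ↦ 1 / x) (by fun_prop) (by simpa only [one_div] using hasDerivAt_inv hC)
  have hgauss : (gaussianReal 0 v.toNNReal).map (fun x ↦ -(C ^ 2)⁻¹ * x) =
      gaussianReal 0 (v / C ^ 4).toNNReal := by
    rw [gaussianReal_map_const_mul, mul_zero, div_eq_inv_mul,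
      Real.toNNReal_mul (by positivity)]
    congr 2
    ext
    rw [NNReal.coe_mk, Real.coe_toNNReal _ (by positivity), neg_sq, inv_pow, ← pow_mul]
  intro f
  rw [← hgauss, integral_map (by fun_prop) f.continuous.aestronglyMeasurable]
  exact (tendstoInDistribution_iff_forall_integral_tendsto (fun n ↦ by fun_prop)
    (by fun_prop)).1 hrecip f
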